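/- Let n = 2k be even with k > 1 and f(x) = x^{2^n-2} the inverse function on F_{2^n}. Let g : F_{2^n} → F_2 be a Boolean function. Then F : F_{2^n} → F_{2^n} ⊕ F_2 defined by F(x) = (f(x), g(x)) is APN if and only if g(0) + g(a) + g(ωa) + g(ω²a) = 1 for every nonzero a ∈ F_{2^n}, where ω ∈ F_{2^2} \ F_2. -/

import Mathlib

/-- `f` is almost perfect nonlinear. -/
def IsAPN {V W : Type*} [AddCommGroup V] [AddCommGroup W] (f : V → W) : Prop :=
  ∀ a : V, a ≠ 0 → ∀ b : W, {x : V | f (x + a) + f x = b}.ncard ≤ 2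

/-!
In characteristic 2, for `a ≠ 0` the solutions of `(x + a)⁻¹ + x⁻¹ = b` form a single coset
`{x, x + a}` (or nothing) unless `b = a⁻¹`; then they are the `x` with `x (x + a) ∈ {0, a²}`,
namely the two cosets `{0, a}` and `{ω a, ω² a}`. The second coordinate `g (x + a) + g x` is
constant on each coset, so `x ↦ (x⁻¹, g x)` is APN exactly when it separates these two cosets,
i.e. when `g 0 + g a + g (ω a) + g (ω² a) = 1`.
-/

lemma Set.ncard_le_two_of_forall_eq_or_eq_add {G : Type*} [Add G] {a : G} {s : Set G}
    (h : ∀ x ∈ s, ∀ y ∈ s, y = x ∨ y = x + a) : s.ncard ≤ 2 := by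
  obtain rfl | ⟨x, hx⟩ := s.eq_empty_or_nonempty
  · simp
  calc s.ncard ≤ ({x, x + a} : Set G).ncard :=
        Set.ncard_le_ncard (fun y hy => h x hx y hy) (Set.toFinite _)
    _ ≤ 2 := (Set.ncard_insert_le _ _).trans (by rw [Set.ncard_singleton])

lemma ZMod.add_eq_one_iff_ne {u v : ZMod 2} : u + v = 1 ↔ u ≠ v := by
  revert u v
  decide

lemma FiniteField.pow_card_sub_two_eq_inv {K : Type*} [Field K] [Finite K]
    (hK : 2 < Nat.card K) (x : K) : x ^ (Nat.card K - 2) = x⁻¹ := by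
  have := Fintype.ofFinite K
  rw [Nat.card_eq_fintype_card] at hK ⊢
  rcases eq_or_ne x 0 with rfl | hx
  · rw [zero_pow (by omega), inv_zero]
  · refine eq_inv_of_mul_eq_one_left ?_
    rw [← pow_succ, show Fintype.card K - 2 + 1 = Fintype.card K - 1 by omega]
    exact FiniteField.pow_card_sub_one_eq_one x hx

section CharTwo

variable {K : Type*} [Field K] [CharP K 2]

lemma eq_or_eq_add_of_mul_add_eq {a x y : K} (h : x * (x + a) = y * (y + a)) :
    y = x ∨ y = x + a := by
  have h2 : (2 : K) = 0 := CharTwo.two_eq_zero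
  have hfactor : (y + x) * (y + x + a) = 0 := by linear_combination h + (y * (y + a) + x * y) * h2
  rcases mul_eq_zero.mp hfactor with h' | h'
  · left; linear_combination h' - x * h2
  · right; linear_combination h' - (x + a) * h2

lemma inv_add_inv_eq_div {a x : K} (hx : x ≠ 0) (hxa : x + a ≠ 0) :
    (x + a)⁻¹ + x⁻¹ = a / (x * (x + a)) := by
  field_simp
  linear_combination x * CharTwo.two_eq_zero (R := K)

lemma inv_add_inv_eq_inv_iff {a x : K} (ha : a ≠ 0) :
    (x + a)⁻¹ + x⁻¹ = a⁻¹ ↔ x * (x + a) = 0 ∨ x * (x + a) = a ^ 2 := by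
  by_cases hx : x * (x + a) = 0
  · simp only [hx, true_or, iff_true]
    rcases mul_eq_zero.mp hx with rfl | hxa
    · simp
    · rw [hxa, CharTwo.add_eq_iff_eq_add.mp hxa, zero_add, inv_zero, zero_add]
  · rw [inv_add_inv_eq_div (left_ne_zero_of_mul hx) (right_ne_zero_of_mul hx), or_iff_right hx,
      div_eq_iff hx, eq_comm, inv_mul_eq_iff_eq_mul₀ ha, sq]

lemma eq_or_eq_add_of_inv_add_inv_eq {a b x y : K} (ha : a ≠ 0) (hb : b ≠ a⁻¹)
    (hx : (x + a)⁻¹ + x⁻¹ = b) (hy : (y + a)⁻¹ + y⁻¹ = b) : y = x ∨ y = x + a := by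
  have key : ∀ z, (z + a)⁻¹ + z⁻¹ = b → b * (z * (z + a)) = a := by
    intro z hz
    have hz0 : z * (z + a) ≠ 0 := fun h => hb (hz ▸ (inv_add_inv_eq_inv_iff ha).2 (Or.inl h))
    rw [← hz, inv_add_inv_eq_div (left_ne_zero_of_mul hz0) (right_ne_zero_of_mul hz0),
      div_mul_cancel₀ _ hz0]
  have hb0 : b ≠ 0 := left_ne_zero_of_mul (ne_of_eq_of_ne (key x hx) ha)
  exact eq_or_eq_add_of_mul_add_eq (mul_left_cancel₀ hb0 ((key x hx).trans (key y hy).symm))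

lemma mul_add_eq_sq_mul_of_sq_add_add_one_eq_zero {ω : K} (hω : ω ^ 2 + ω + 1 = 0) (a : K) :
    ω * a + a = ω ^ 2 * a := by
  linear_combination -a * hω + (ω * a + a) * CharTwo.two_eq_zero (R := K)

lemma mul_mul_add_eq_sq_of_sq_add_add_one_eq_zero {ω : K} (hω : ω ^ 2 + ω + 1 = 0) (a : K) :
    ω * a * (ω * a + a) = a ^ 2 := by
  linear_combination a ^ 2 * hω - a ^ 2 * CharTwo.two_eq_zero (R := K)

lemma add_ne_add_of_isAPN_inv_prod [Finite K] {ω : K} (hω : ω ^ 2 + ω + 1 = 0)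
    {g : K → ZMod 2} (hF : IsAPN (fun x => (x⁻¹, g x))) {a : K} (ha : a ≠ 0) :
    g a + g 0 ≠ g (ω * a + a) + g (ω * a) := by
  have hω0 : ω ≠ 0 := by rintro rfl; simp at hω
  have hω1 : ω ≠ 1 := by
    rintro rfl
    exact one_ne_zero (by linear_combination hω - CharTwo.two_eq_zero (R := K))
  have hωa : a ≠ ω * a := fun h => hω1 (mul_right_cancel₀ ha (h.symm.trans (one_mul a).symm))
  intro hsep
  refine (hF a ha (a⁻¹, g a + g 0)).not_gt ((Set.two_lt_ncard_iff (Set.toFinite _)).2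
    ⟨0, a, ω * a, Prod.ext ?_ ?_, Prod.ext ?_ ?_, Prod.ext ?_ hsep.symm, ha.symm,
      (mul_ne_zero hω0 ha).symm, hωa⟩)
  · simp
  · simp
  · simp [CharTwo.add_self_eq_zero]
  · simp [CharTwo.add_self_eq_zero, add_comm]
  · exact (inv_add_inv_eq_inv_iff ha).2
      (Or.inr (mul_mul_add_eq_sq_of_sq_add_add_one_eq_zero hω a))

lemma isAPN_inv_prod_of_add_ne_add {ω : K} (hω : ω ^ 2 + ω + 1 = 0) {g : K → ZMod 2}
    (hsep : ∀ a ≠ 0, g a + g 0 ≠ g (ω * a + a) + g (ω * a)) :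
    IsAPN (fun x => (x⁻¹, g x)) := by
  intro a ha ⟨b, c⟩
  refine Set.ncard_le_two_of_forall_eq_or_eq_add (a := a) fun x hx y hy => ?_
  obtain ⟨hxb, hxc⟩ := Prod.ext_iff.1 hx
  obtain ⟨hyb, hyc⟩ := Prod.ext_iff.1 hy
  dsimp only at hxb hxc hyb hyc
  rcases eq_or_ne b a⁻¹ with rfl | hb
  swap
  · exact eq_or_eq_add_of_inv_add_inv_eq ha hb hxb hyb
  have hclass : ∀ z, (z + a)⁻¹ + z⁻¹ = a⁻¹ →
      (z * (z + a) = 0 ∧ g (z + a) + g z = g a + g 0) ∨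
      (z * (z + a) = a ^ 2 ∧ g (z + a) + g z = g (ω * a + a) + g (ω * a)) := by
    intro z hz
    rcases (inv_add_inv_eq_inv_iff ha).1 hz with h | h
    · refine Or.inl ⟨h, ?_⟩
      rcases mul_eq_zero.1 h with rfl | h'
      · rw [zero_add]
      · obtain rfl : z = a := by simpa using CharTwo.add_eq_iff_eq_add.mp h'
        simp [CharTwo.add_self_eq_zero, add_comm]
    · refine Or.inr ⟨h, ?_⟩
      rcases eq_or_eq_add_of_mul_add_eq
        ((mul_mul_add_eq_sq_of_sq_add_add_one_eq_zero hω a).trans h.symm) with rfl | rfl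
      · rfl
      · rw [add_assoc, CharTwo.add_self_eq_zero, add_zero, add_comm]
  rcases hclass x hxb with ⟨hx0, hxg⟩ | ⟨hx0, hxg⟩ <;>
    rcases hclass y hyb with ⟨hy0, hyg⟩ | ⟨hy0, hyg⟩
  · exact eq_or_eq_add_of_mul_add_eq (hx0.trans hy0.symm)
  · exact absurd (hxg.symm.trans (hxc.trans (hyc.symm.trans hyg))) (hsep a ha)
  · exact absurd (hyg.symm.trans (hyc.trans (hxc.symm.trans hxg))) (hsep a ha)
  · exact eq_or_eq_add_of_mul_add_eq (hx0.trans hy0.symm)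

theorem isAPN_inv_prod_iff [Finite K] {ω : K} (hω : ω ^ 2 + ω + 1 = 0) (g : K → ZMod 2) :
    IsAPN (fun x => (x⁻¹, g x)) ↔
      ∀ a ≠ 0, g 0 + g a + g (ω * a) + g (ω ^ 2 * a) = 1 := by
  have hcond : ∀ a, g 0 + g a + g (ω * a) + g (ω ^ 2 * a) = 1 ↔
      g a + g 0 ≠ g (ω * a + a) + g (ω * a) := fun a => by
    rw [mul_add_eq_sq_mul_of_sq_add_add_one_eq_zero hω, ← ZMod.add_eq_one_iff_ne]
    constructor <;> intro h <;> linear_combination h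
  simp only [hcond]
  exact ⟨fun hF _ => add_ne_add_of_isAPN_inv_prod hω hF, isAPN_inv_prod_of_add_ne_add hω⟩

end CharTwo

theorem stmt5 (k : ℕ) (hk : 1 < k) (n : ℕ) (hn : n = 2 * k)
    (f : GaloisField 2 n → GaloisField 2 n)
    (hf : ∀ x, f x = x ^ (2 ^ n - 2))
    (ω : GaloisField 2 n) (hω3 : ω ^ 3 = 1) (hω1 : ω ≠ 1)
    (g : GaloisField 2 n → ZMod 2) :
    IsAPN (fun x => ((f x, g x) : GaloisField 2 n × ZMod 2)) ↔
      ∀ a : GaloisField 2 n, a ≠ 0 →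
        g 0 + g a + g (ω * a) + g (ω ^ 2 * a) = 1 := by
  have hn0 : n ≠ 0 := by omega
  have hcard : 2 < Nat.card (GaloisField 2 n) := by
    rw [GaloisField.card 2 n hn0]
    calc 2 < 2 ^ 2 := by norm_num
      _ ≤ 2 ^ n := Nat.pow_le_pow_right (by norm_num) (by omega)
  obtain rfl : f = fun x => x⁻¹ := funext fun x => by
    rw [hf, ← GaloisField.card 2 n hn0, FiniteField.pow_card_sub_two_eq_inv hcard]
  have hω : ω ^ 2 + ω + 1 = 0 :=
    mul_left_cancel₀ (sub_ne_zero.2 hω1) (by linear_combination hω3)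
  exact isAPN_inv_prod_iff hω g
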